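/- arXiv:1204.4699 — 3 statements merged into one kernel-verified Lean document; each statement's English description precedes it below -/
import Mathlib

section
/- For any discrete random variable X with probability mass function p(x) = P(X = x), the mid-distribution function F_mid(x) = F(x) - 0.5·p(x) satisfies E[F_mid(X)] = 1/2. -/
/-! Summing `p i * p j` over `j ≤ i` and over `j ≥ i` counts every pair once and every diagonal
term twice, so `2 ∑ᵢ pᵢ F(xᵢ) = (∑ᵢ pᵢ)² + ∑ᵢ pᵢ² = 1 + ∑ᵢ pᵢ²`; the correction `-pᵢ/2` in
`F_mid` removes exactly the diagonal surplus. -/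

open Finset

section

variable {ι R : Type*} [Fintype ι] [LinearOrder ι] [LocallyFiniteOrderBot ι]
  [LocallyFiniteOrderTop ι] [CommRing R]

theorem sum_mul_sum_Iic_eq_sum_mul_sum_Ici (w : ι → R) :
    ∑ i, w i * ∑ j ∈ Iic i, w j = ∑ i, w i * ∑ j ∈ Ici i, w j := by
  calc ∑ i, w i * ∑ j ∈ Iic i, w j
      = ∑ j, ∑ i ∈ Ici j, w i * w j := by
        simp only [mul_sum]
        exact sum_comm' (by simp)
    _ = ∑ j, w j * ∑ i ∈ Ici j, w i := by
        simp only [mul_sum, mul_comm]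

theorem sum_Iic_add_sum_Ici (w : ι → R) (i : ι) :
    ∑ j ∈ Iic i, w j + ∑ j ∈ Ici i, w j = ∑ j, w j + w i := by
  have hunion : Iic i ∪ Ici i = univ := by ext j; simp [le_total]
  have hinter : Iic i ∩ Ici i = {i} := by ext j; simp [le_antisymm_iff]
  rw [← sum_union_inter, hunion, hinter, sum_singleton]

theorem two_mul_sum_mul_sum_Iic (w : ι → R) :
    2 * ∑ i, w i * ∑ j ∈ Iic i, w j = (∑ i, w i) ^ 2 + ∑ i, w i ^ 2 := by
  calc 2 * ∑ i, w i * ∑ j ∈ Iic i, w j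
      = ∑ i, w i * (∑ j ∈ Iic i, w j + ∑ j ∈ Ici i, w j) := by
        rw [two_mul]
        nth_rw 2 [sum_mul_sum_Iic_eq_sum_mul_sum_Ici]
        simp only [mul_add, sum_add_distrib]
    _ = (∑ i, w i) ^ 2 + ∑ i, w i ^ 2 := by
        simp only [sum_Iic_add_sum_Ici, mul_add, sum_add_distrib, ← sum_mul, sq]

end

theorem StrictMono.sum_ite_le_eq_sum_Iic {ι α R : Type*} [Fintype ι] [LinearOrder ι]
    [LocallyFiniteOrderBot ι] [Preorder α] [DecidableLE α] [AddCommMonoid R] {x : ι → α}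
    (hx : StrictMono x) (p : ι → R) (i : ι) :
    (∑ j, if x j ≤ x i then p j else 0) = ∑ j ∈ Iic i, p j := by
  simp only [hx.le_iff_le, ← sum_filter, filter_ge_eq_Iic]

theorem mid_distribution_mean_half_general (k : ℕ) (x : Fin k → ℝ) (hx : StrictMono x)
    (p : Fin k → ℝ) (hsum : ∑ i, p i = 1)
    (F : ℝ → ℝ) (hF : ∀ t, F t = ∑ j, if x j ≤ t then p j else 0)
    (Fmid : ℝ → ℝ) (hFmid : ∀ i : Fin k, Fmid (x i) = F (x i) - (1 / 2) * p i) :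
    ∑ i, p i * Fmid (x i) = 1 / 2 := by
  have hterm : ∀ i, p i * Fmid (x i) = p i * ∑ j ∈ Iic i, p j - p i ^ 2 / 2 := by
    intro i
    rw [hFmid, hF, hx.sum_ite_le_eq_sum_Iic]
    ring
  have htwo := two_mul_sum_mul_sum_Iic p
  rw [hsum] at htwo
  simp only [hterm, sum_sub_distrib, ← sum_div]
  linarith

/-- For a discrete random variable `X` taking finitely many values `x 0 < ... < x (k-1)`
with probabilities `p i > 0` summing to 1, the mid-distribution function
`Fmid t = F t - 0.5 * P(X = t)` satisfies `E[Fmid(X)] = 1/2`. -/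
theorem mid_distribution_mean_half (k : ℕ) (hk : 0 < k) (x : Fin k → ℝ) (hx : StrictMono x)
    (p : Fin k → ℝ) (hp : ∀ i, 0 < p i) (hsum : ∑ i, p i = 1)
    (F : ℝ → ℝ) (hF : ∀ t, F t = ∑ j, if x j ≤ t then p j else 0)
    (Fmid : ℝ → ℝ) (hFmid : ∀ i : Fin k, Fmid (x i) = F (x i) - (1 / 2) * p i) :
    ∑ i, p i * Fmid (x i) = 1 / 2 :=
  mid_distribution_mean_half_general k x hx p hsum F hF Fmid hFmid
end

section
/- For any discrete random variable X, the variance of the mid-distribution transform satisfies Var[F_mid(X)] = (1/12)(1 - E[p(X)²]), where p(x) = P(X = x). -/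
open Finset

private lemma mean_aux (q : ℕ → ℝ) (n : ℕ) :
    ∑ i ∈ Finset.range n, q i * (∑ j ∈ Finset.range (i + 1), q j)
      = ((∑ i ∈ Finset.range n, q i) ^ 2 + ∑ i ∈ Finset.range n, (q i) ^ 2) / 2 := by
  induction n with
  | zero => simp
  | succ n ih =>
    rw [Finset.sum_range_succ, ih, Finset.sum_range_succ q,
      Finset.sum_range_succ (fun i => (q i) ^ 2)]
    ring

private lemma cube_aux (q : ℕ → ℝ) (n : ℕ) :
    ∑ i ∈ Finset.range n,
      q i * (3 * (∑ j ∈ Finset.range (i + 1), q j) ^ 2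
        - 3 * q i * (∑ j ∈ Finset.range (i + 1), q j) + (q i) ^ 2)
      = (∑ i ∈ Finset.range n, q i) ^ 3 := by
  induction n with
  | zero => simp
  | succ n ih =>
    rw [Finset.sum_range_succ, ih, Finset.sum_range_succ q]
    ring

/-- For a discrete random variable `X`, `Var[Fmid(X)] = (1/12)(1 - E[p(X)²])`. -/
theorem mid_distribution_variance (k : ℕ) (hk : 0 < k) (x : Fin k → ℝ) (hx : StrictMono x)
    (p : Fin k → ℝ) (hp : ∀ i, 0 < p i) (hsum : ∑ i, p i = 1)
    (F : ℝ → ℝ) (hF : ∀ t, F t = ∑ j, if x j ≤ t then p j else 0)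
    (Fmid : ℝ → ℝ) (hFmid : ∀ i : Fin k, Fmid (x i) = F (x i) - (1 / 2) * p i) :
    ∑ i, p i * (Fmid (x i) - ∑ j, p j * Fmid (x j)) ^ 2
      = (1 / 12) * (1 - ∑ i, (p i) ^ 3) := by
  set q : ℕ → ℝ := fun n => if h : n < k then p ⟨n, h⟩ else 0 with hq
  have hqv : ∀ i : Fin k, q i.1 = p i := by
    intro i; simp [hq, i.2]
  set A : ℕ → ℝ := fun m => ∑ j ∈ Finset.range (m + 1), q j with hA
  -- value of F at x i
  have hFx : ∀ i : Fin k, F (x i) = A i.1 := by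
    intro i
    rw [hF]
    have h1 : (∑ j, if x j ≤ x i then p j else 0)
        = ∑ m ∈ Finset.range k, if m ≤ i.1 then q m else 0 := by
      rw [← Fin.sum_univ_eq_sum_range (fun m => if m ≤ i.1 then q m else 0) k]
      apply Finset.sum_congr rfl
      intro j _
      by_cases h : (j : ℕ) ≤ (i : ℕ)
      · simp [hx.le_iff_le, Fin.le_def, h, hqv j]
      · simp [hx.le_iff_le, Fin.le_def, h]
    rw [h1, hA]
    have hsub : Finset.range (i.1 + 1) ⊆ Finset.range k :=
      Finset.range_subset_range.2 i.2
    rw [← Finset.sum_subset hsub (fun m _ hm => by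
      have : ¬ m ≤ i.1 := by
        simp only [Finset.mem_range, Nat.lt_succ_iff] at hm; exact hm
      simp [this])]
    apply Finset.sum_congr rfl
    intro m hm
    have : m ≤ i.1 := Nat.lt_succ_iff.mp (Finset.mem_range.mp hm)
    simp [this]
  have hmid : ∀ i : Fin k, Fmid (x i) = A i.1 - q i.1 / 2 := by
    intro i; rw [hFmid, hFx, hqv]; ring
  -- convert basic sums
  have hsum_q : ∑ m ∈ Finset.range k, q m = 1 := by
    rw [← Fin.sum_univ_eq_sum_range q k]
    rw [← hsum]
    exact Finset.sum_congr rfl fun i _ => hqv i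
  have hS3 : ∑ m ∈ Finset.range k, (q m) ^ 3 = ∑ i, (p i) ^ 3 := by
    rw [← Fin.sum_univ_eq_sum_range (fun m => (q m) ^ 3) k]
    exact Finset.sum_congr rfl fun i _ => by rw [hqv i]
  -- the mean equals 1/2
  have hmu : (∑ j, p j * Fmid (x j)) = 1 / 2 := by
    have h1 : (∑ j, p j * Fmid (x j))
        = ∑ m ∈ Finset.range k, q m * (A m - q m / 2) := by
      rw [← Fin.sum_univ_eq_sum_range (fun m => q m * (A m - q m / 2)) k]
      exact Finset.sum_congr rfl fun j _ => by rw [hmid j, hqv j]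
    rw [h1]
    have h2 : ∀ m ∈ Finset.range k,
        q m * (A m - q m / 2) = q m * A m - (1 / 2) * (q m) ^ 2 :=
      fun m _ => by ring
    rw [Finset.sum_congr rfl h2, Finset.sum_sub_distrib, ← Finset.mul_sum,
      mean_aux q k, hsum_q]
    ring
  rw [hmu]
  have h3 : (∑ i, p i * (Fmid (x i) - 1 / 2) ^ 2)
      = ∑ m ∈ Finset.range k, q m * (A m - q m / 2 - 1 / 2) ^ 2 := by
    rw [← Fin.sum_univ_eq_sum_range (fun m => q m * (A m - q m / 2 - 1 / 2) ^ 2) k]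
    exact Finset.sum_congr rfl fun i _ => by rw [hmid i, hqv i]
  rw [h3]
  have h4 : ∀ m ∈ Finset.range k,
      q m * (A m - q m / 2 - 1 / 2) ^ 2
        = (1 / 3) * (q m * (3 * (A m) ^ 2 - 3 * q m * (A m) + (q m) ^ 2))
          - q m * A m - (1 / 12) * (q m) ^ 3 + (1 / 2) * (q m) ^ 2
          + (1 / 4) * q m :=
    fun m _ => by ring
  rw [Finset.sum_congr rfl h4]
  simp only [Finset.sum_add_distrib, Finset.sum_sub_distrib, ← Finset.mul_sum]
  rw [cube_aux q k, mean_aux q k, hsum_q, hS3]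
  ring
end

section
/- For a standard normal random variable X with quantile function Q(u) = Φ⁻¹(u), the first LP moment LP(1;X) = ∫₀¹ Q(u)·√12(u − 1/2) du satisfies |LP(1;X)|² = 3/π, so |LP(1;X)|²/Var(X) = 3/π ≈ 0.955. -/
/-!
Substituting `u = Φ x` turns `LP(1;X)` into `√12 · E[X (Φ(X) - 1/2)]`. Stein's identity
`E[X g(X)] = E[g'(X)]` with `g = Φ - 1/2` turns this into `√12 · ∫ φ² = √12 / (2√π)`,
whose square is `12 / (4π) = 3/π`.
-/

open MeasureTheory Set Filter Topology ProbabilityTheory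

local notation "φ" => gaussianPDFReal 0 1

lemma StrictMono.range_eq_Ioo_of_tendsto {F : ℝ → ℝ} {a b : ℝ} (hF : StrictMono F)
    (hc : Continuous F) (hbot : Tendsto F atBot (𝓝 a)) (htop : Tendsto F atTop (𝓝 b)) :
    range F = Ioo a b := by
  refine subset_antisymm ?_ fun c ⟨hac, hcb⟩ => ?_
  · rintro _ ⟨x, rfl⟩
    exact ⟨(hF.monotone.le_of_tendsto hbot (x - 1)).trans_lt (hF (sub_one_lt x)),
      (hF (lt_add_one x)).trans_le (hF.monotone.ge_of_tendsto htop (x + 1))⟩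
  · exact mem_range_of_exists_le_of_exists_ge hc (hbot.eventually (eventually_le_nhds hac)).exists
      (htop.eventually (eventually_ge_nhds hcb)).exists

section IntegralIic

variable {f : ℝ → ℝ}

lemma integral_Iic_eq_add_intervalIntegral (hf : Integrable f) (y : ℝ) :
    ∫ t in Iic y, f t = (∫ t in Iic 0, f t) + ∫ t in (0 : ℝ)..y, f t := by
  rw [← intervalIntegral.integral_Iic_sub_Iic hf.integrableOn hf.integrableOn, add_sub_cancel]

lemma hasDerivAt_integral_Iic (hc : Continuous f) (hf : Integrable f) (x : ℝ) :
    HasDerivAt (fun y => ∫ t in Iic y, f t) (f x) x :=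
  ((hc.integral_hasStrictDerivAt 0 x).hasDerivAt.const_add _).congr_of_eventuallyEq
    (.of_forall (integral_Iic_eq_add_intervalIntegral hf))

lemma tendsto_integral_Iic_atBot (hf : Integrable f) :
    Tendsto (fun y => ∫ t in Iic y, f t) atBot (𝓝 0) := by
  have h := (intervalIntegral_tendsto_integral_Iic 0 hf.integrableOn tendsto_id).const_sub
    (∫ t in Iic 0, f t)
  rw [sub_self] at h
  refine h.congr fun y => ?_
  rw [id, integral_Iic_eq_add_intervalIntegral hf y, intervalIntegral.integral_symm]
  ring

lemma tendsto_integral_Iic_atTop (hf : Integrable f) :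
    Tendsto (fun y => ∫ t in Iic y, f t) atTop (𝓝 (∫ t, f t)) := by
  simpa only [iUnion_Iic, Measure.restrict_univ] using
    tendsto_setIntegral_of_monotone (fun y => measurableSet_Iic)
      (fun _ _ hab => Iic_subset_Iic.2 hab) (iUnion_Iic (α := ℝ) ▸ hf.integrableOn)

lemma strictMono_integral_Iic (hc : Continuous f) (hf : Integrable f) (hpos : ∀ x, 0 < f x) :
    StrictMono fun y => ∫ t in Iic y, f t :=
  strictMono_of_deriv_pos fun x => (hasDerivAt_integral_Iic hc hf x).deriv ▸ hpos x

lemma range_integral_Iic (hc : Continuous f) (hf : Integrable f) (hpos : ∀ x, 0 < f x) :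
    range (fun y => ∫ t in Iic y, f t) = Ioo 0 (∫ t, f t) :=
  (strictMono_integral_Iic hc hf hpos).range_eq_Ioo_of_tendsto
    (continuous_iff_continuousAt.2 fun x => (hasDerivAt_integral_Iic hc hf x).continuousAt)
    (tendsto_integral_Iic_atBot hf) (tendsto_integral_Iic_atTop hf)

end IntegralIic

lemma integral_range_quantile_mul {F f Q : ℝ → ℝ} (hF : ∀ x, HasDerivAt F (f x) x)
    (hmono : Monotone F) (hQF : ∀ x, Q (F x) = x) (S : ℝ → ℝ) :
    ∫ u in range F, Q u * S u = ∫ x, f x * (x * S (F x)) := by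
  rw [← image_univ, integral_image_eq_integral_deriv_smul_of_monotoneOn MeasurableSet.univ
    (fun x _ => (hF x).hasDerivWithinAt) (hmono.monotoneOn univ), Measure.restrict_univ]
  simp only [hQF, smul_eq_mul]

lemma gaussianPDFReal_zero_one :
    φ = fun x => Real.exp (-x ^ 2 / 2) / Real.sqrt (2 * Real.pi) := by
  funext x
  simp only [gaussianPDFReal, NNReal.coe_one, mul_one, sub_zero, div_eq_inv_mul]

lemma hasDerivAt_gaussianPDFReal_zero_one (x : ℝ) : HasDerivAt φ (-x * φ x) x := by
  have h : HasDerivAt (fun y => -y ^ 2 / 2) (-x) x :=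
    ((hasDerivAt_pow 2 x).fun_neg.div_const 2).congr_deriv (by ring)
  rw [gaussianPDFReal_zero_one]
  exact (h.exp.div_const _).congr_deriv (by ring)

lemma continuous_gaussianPDFReal_zero_one : Continuous φ :=
  continuous_iff_continuousAt.2 fun x => (hasDerivAt_gaussianPDFReal_zero_one x).continuousAt

lemma integrable_id_mul_gaussianPDFReal_zero_one : Integrable fun x => x * φ x := by
  refine ((integrable_mul_exp_neg_mul_sq (by norm_num : (0 : ℝ) < 1 / 2)).div_const
    (Real.sqrt (2 * Real.pi))).congr (ae_of_all _ fun x => ?_)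
  simp only [gaussianPDFReal_zero_one]
  ring_nf

lemma gaussianPDFReal_zero_one_mul_self (x : ℝ) :
    φ x * φ x = (2 * Real.pi)⁻¹ * Real.exp (-1 * x ^ 2) := by
  rw [gaussianPDFReal_zero_one, div_mul_div_comm, ← Real.exp_add,
    Real.mul_self_sqrt (by positivity)]
  ring_nf

lemma integrable_gaussianPDFReal_zero_one_mul_self : Integrable fun x => φ x * φ x := by
  simpa only [gaussianPDFReal_zero_one_mul_self] using
    (integrable_exp_neg_mul_sq one_pos).const_mul (2 * Real.pi)⁻¹

lemma integral_gaussianPDFReal_zero_one_mul_self :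
    ∫ x, φ x * φ x = (2 * Real.sqrt Real.pi)⁻¹ := by
  simp only [gaussianPDFReal_zero_one_mul_self, integral_const_mul, integral_gaussian, div_one]
  have := Real.mul_self_sqrt Real.pi_pos.le
  field_simp
  linarith

-- Stein's identity `E[X g(X)] = E[g'(X)]`: integrate by parts against `φ' = -x φ`.
lemma integral_mul_mul_gaussianPDFReal_zero_one {g g' : ℝ → ℝ} (hg : ∀ x, HasDerivAt g (g' x) x)
    {C : ℝ} (hC : ∀ x, |g x| ≤ C) (hg' : Integrable fun x => g' x * φ x) :
    ∫ x, x * g x * φ x = ∫ x, g' x * φ x := by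
  have hgm : AEStronglyMeasurable g :=
    (continuous_iff_continuousAt.2 fun x => (hg x).continuousAt).aestronglyMeasurable
  have hgC : ∀ᵐ x, ‖g x‖ ≤ C := ae_of_all _ hC
  have parts := integral_mul_deriv_eq_deriv_mul_of_integrable (u := g) (v := φ)
    (v' := fun x => -x * φ x) (fun x _ => hg x) (fun x _ => hasDerivAt_gaussianPDFReal_zero_one x)
    ?_ hg' ?_
  · calc ∫ x, x * g x * φ x = -∫ x, g x * (-x * φ x) := by
          rw [← integral_neg]; congr with x; ring
      _ = ∫ x, g' x * φ x := by rw [parts, neg_neg]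
  · refine (integrable_id_mul_gaussianPDFReal_zero_one.neg.bdd_mul hgm hgC).congr
      (ae_of_all _ fun x => ?_)
    simp only [Pi.mul_apply, Pi.neg_apply, neg_mul]
  · exact (integrable_gaussianPDFReal 0 1).bdd_mul hgm hgC

/-- For standard normal `X` with quantile function `Q = Φ⁻¹`, the first LP moment
`LP(1;X) = ∫₀¹ Φ⁻¹(u)·√12(u − 1/2)du` satisfies `|LP(1;X)|² = 3/π` (and `Var(X) = 1`,
so `|LP(1;X)|²/Var(X) = 3/π ≈ 0.955`). -/
theorem normal_first_LP_moment
    (Φ Q S₁ : ℝ → ℝ)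
    (hΦ : ∀ x, Φ x = ∫ t in Iic x, Real.exp (-t ^ 2 / 2) / Real.sqrt (2 * Real.pi))
    (hQ : ∀ u ∈ Ioo (0:ℝ) 1, Φ (Q u) = u)
    (hS₁ : ∀ u, S₁ u = Real.sqrt 12 * (u - 1 / 2))
    (LP₁ : ℝ) (hLP₁ : LP₁ = ∫ u in Ioo (0:ℝ) 1, Q u * S₁ u) :
    LP₁ ^ 2 = 3 / Real.pi := by
  have hΦφ : Φ = fun x => ∫ t in Iic x, φ t :=
    funext fun x => by rw [hΦ, gaussianPDFReal_zero_one]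
  have hc := continuous_gaussianPDFReal_zero_one
  have hi := integrable_gaussianPDFReal 0 1
  have hpos (x : ℝ) : 0 < φ x := gaussianPDFReal_pos 0 1 x one_ne_zero
  have hderiv : ∀ x, HasDerivAt Φ (φ x) x := hΦφ ▸ hasDerivAt_integral_Iic hc hi
  have hmono : StrictMono Φ := hΦφ ▸ strictMono_integral_Iic hc hi hpos
  have hrange : range Φ = Ioo 0 1 := by
    rw [hΦφ, range_integral_Iic hc hi hpos, integral_gaussianPDFReal_eq_one 0 one_ne_zero]
  have hQΦ (x : ℝ) : Q (Φ x) = x := hmono.injective (hQ _ (hrange ▸ mem_range_self x))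
  have hcentered (x : ℝ) : |Φ x - 1 / 2| ≤ 1 / 2 := by
    obtain ⟨h0, h1⟩ : Φ x ∈ Ioo 0 1 := hrange ▸ mem_range_self x
    exact abs_le.2 ⟨by linarith, by linarith⟩
  have hLP : LP₁ = Real.sqrt 12 * ∫ x, x * (Φ x - 1 / 2) * φ x := by
    rw [hLP₁, ← hrange, integral_range_quantile_mul hderiv hmono.monotone hQΦ,
      ← integral_const_mul]
    congr with x
    rw [hS₁]
    ring
  have hStein : ∫ x, x * (Φ x - 1 / 2) * φ x = (2 * Real.sqrt Real.pi)⁻¹ := by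
    rw [integral_mul_mul_gaussianPDFReal_zero_one (fun x => (hderiv x).sub_const _) hcentered
      integrable_gaussianPDFReal_zero_one_mul_self, integral_gaussianPDFReal_zero_one_mul_self]
  rw [hLP, hStein, mul_pow, inv_pow, mul_pow, Real.sq_sqrt (by norm_num),
    Real.sq_sqrt Real.pi_pos.le]
  field_simp
  norm_num
end
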